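/- arXiv:1409.2786 — 2 statements merged into one kernel-verified Lean document; each statement's English description precedes it below -/
import Mathlib

section
/- Along the boundary hyperplane between power cells, under a perturbation (x_i, w_i) ↦ (x_i + t x̃_i, w_i + t w̃_i) of the generators, a point x(t) remaining on the common boundary of cells j and k satisfies, at t = 0: the normal velocity V(x)·n_{jk} = [ (x - x_j)·x̃_j - (x - x_k)·x̃_k ]/d_{jk} + (w̃_j - w̃_k)/(2 d_{jk}), where n_{jk} = (x_k - x_j)/d_{jk} and d_{jk} = |x_k - x_j|. Precisely: if x(t) satisfies |x(t) - x_j - t x̃_j|² - w_j - t w̃_j = |x(t) - x_k - t x̃_k|² - w_k - t w̃_k for all t near 0 and x(t) is differentiable at 0 with x(0) = x, V = x'(0), then the displayed formula holds. -/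
open scoped RealInnerProductSpace

/-!
Differentiating the defining identity of the common boundary at `t = 0` gives
`2⟪x - x_j, V - x̃_j⟫ - w̃_j = 2⟪x - x_k, V - x̃_k⟫ - w̃_k`; since
`(x - x_j) - (x - x_k) = x_k - x_j`, this is a linear equation for `⟪V, x_k - x_j⟫`,
and dividing by `d_{jk}` gives the normal velocity.
-/

section

variable {E : Type*} [NormedAddCommGroup E] [InnerProductSpace ℝ E]

theorem HasDerivAt.powerDistance_movingSite {x : ℝ → E} {V : E} {t₀ : ℝ} (hx : HasDerivAt x V t₀)
    (a b : E) (w v : ℝ) :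
    HasDerivAt (fun t => ‖x t - (a + t • b)‖ ^ 2 - (w + t * v))
      (2 * ⟪x t₀ - (a + t₀ • b), V - b⟫ - v) t₀ := by
  have hgen : HasDerivAt (fun t : ℝ => a + t • b) b t₀ := by
    simpa using ((hasDerivAt_id t₀).smul_const b).const_add a
  have hweight : HasDerivAt (fun t : ℝ => w + t * v) v t₀ := by
    simpa using ((hasDerivAt_id t₀).mul_const v).const_add w
  exact (hx.sub hgen).norm_sq.sub hweight

theorem inner_sub_eq_of_powerDistance_derivs_eq {y aj ak V bj bk : E} {vj vk : ℝ}
    (h : 2 * ⟪y - aj, V - bj⟫ - vj = 2 * ⟪y - ak, V - bk⟫ - vk) :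
    ⟪V, ak - aj⟫ = ⟪y - aj, bj⟫ - ⟪y - ak, bk⟫ + (vj - vk) / 2 := by
  have hdiff : ak - aj = (y - aj) - (y - ak) := by abel
  rw [hdiff, inner_sub_right, real_inner_comm (y - aj), real_inner_comm (y - ak)]
  rw [inner_sub_right, inner_sub_right] at h
  linarith

end

theorem stmt15_general {d : ℕ} (xj xk : EuclideanSpace ℝ (Fin d))
    (wj wk : ℝ) (xtj xtk : EuclideanSpace ℝ (Fin d)) (wtj wtk : ℝ)
    (djk : ℝ)
    (njk : EuclideanSpace ℝ (Fin d)) (hn : njk = djk⁻¹ • (xk - xj))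
    (x : ℝ → EuclideanSpace ℝ (Fin d)) (V : EuclideanSpace ℝ (Fin d))
    (hx : HasDerivAt x V 0)
    (heq : ∀ᶠ t in nhds (0 : ℝ),
      ‖x t - (xj + t • xtj)‖ ^ 2 - (wj + t * wtj)
        = ‖x t - (xk + t • xtk)‖ ^ 2 - (wk + t * wtk)) :
    ⟪V, njk⟫ = (⟪x 0 - xj, xtj⟫ - ⟪x 0 - xk, xtk⟫) / djk
        + (wtj - wtk) / (2 * djk) := by
  have hderiv_eq := ((hx.powerDistance_movingSite xk xtk wk wtk).congr_of_eventuallyEq heq).unique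
    (hx.powerDistance_movingSite xj xtj wj wtj)
  simp only [zero_smul, add_zero] at hderiv_eq
  rw [hn, real_inner_smul_right, inner_sub_eq_of_powerDistance_derivs_eq hderiv_eq.symm]
  ring

/-- Normal velocity of a point remaining on the boundary hyperplane between two
power cells under a perturbation of the generators. -/
theorem stmt15 {d : ℕ} (xj xk : EuclideanSpace ℝ (Fin d)) (hne : xj ≠ xk)
    (wj wk : ℝ) (xtj xtk : EuclideanSpace ℝ (Fin d)) (wtj wtk : ℝ)
    (djk : ℝ) (hd : djk = ‖xk - xj‖)
    (njk : EuclideanSpace ℝ (Fin d)) (hn : njk = djk⁻¹ • (xk - xj))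
    (x : ℝ → EuclideanSpace ℝ (Fin d)) (V : EuclideanSpace ℝ (Fin d))
    (hx : HasDerivAt x V 0)
    (heq : ∀ᶠ t in nhds (0 : ℝ),
      ‖x t - (xj + t • xtj)‖ ^ 2 - (wj + t * wtj)
        = ‖x t - (xk + t • xtk)‖ ^ 2 - (wk + t * wtk)) :
    ⟪V, njk⟫ = (⟪x 0 - xj, xtj⟫ - ⟪x 0 - xk, xtk⟫) / djk
        + (wtj - wtk) / (2 * djk) :=
  stmt15_general xj xk wj wk xtj xtk wtj wtk djk njk hn x V hx heq
end

section
/- For a sequence generated by a continuous fixed-point iteration z^{k+1} = T(z^k) in a metric space: if the sequence {z^k} has finitely many accumulation points, each accumulation point is a fixed point of T, T is continuous at these points, and the sequence is contained in a compact set, then z^k converges. -/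
/-!
Along any subsequence on which the steps `d(z^{k+1}, z^k)` stay large, compactness gives a
cluster point `c`, and continuity of `T` at the fixed point `c` forces the steps to be small
there; hence the steps tend to `0`. A sequence with vanishing steps cannot jump between two
distinct isolated cluster points: on its way from near `a` to near `b` it keeps passing
through an annulus around `a` that contains no cluster point, yet compactness produces one
there. So the finitely many cluster points reduce to one, to which the sequence converges.
-/

open Filter Metric Set Topology Function

theorem frequently_mem_Ico_of_frequently_lt_of_frequently_le {u : ℕ → ℝ} {a b : ℝ}
    (hstep : ∀ᶠ k in atTop, u (k + 1) < u k + (b - a))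
    (hlow : ∃ᶠ k in atTop, u k < a) (hhigh : ∃ᶠ k in atTop, a ≤ u k) :
    ∃ᶠ k in atTop, u k ∈ Ico a b := by
  by_contra h
  obtain ⟨N, hN⟩ := eventually_atTop.1 (hstep.and (not_frequently.1 h))
  obtain ⟨k, hkN, hk⟩ := frequently_atTop.1 hlow N
  -- once below `a`, a step shorter than `b - a` cannot clear the gap `Ico a b`
  have hbelow : ∀ m ≥ k, u m < a := by
    intro m hm
    induction m, hm using Nat.le_induction with
    | base => exact hk
    | succ m hkm ih =>
      have hlt_b : u (m + 1) < b := by linarith [(hN m (hkN.trans hkm)).1]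
      by_contra! hge
      exact (hN (m + 1) (by omega)).2 ⟨hge, hlt_b⟩
  obtain ⟨m, hkm, hm⟩ := frequently_atTop.1 hhigh k
  exact (hbelow m hkm).not_ge hm

section

variable {X : Type*} [MetricSpace X]

theorem tendsto_dist_succ_of_mapClusterPt_isFixedPt {T : X → X} {z : ℕ → X} {K : Set X}
    (hz : ∀ k, z (k + 1) = T (z k)) (hK : IsCompact K) (hzK : ∀ k, z k ∈ K)
    (hfix : ∀ x, MapClusterPt x atTop z → IsFixedPt T x)
    (hcont : ∀ x, MapClusterPt x atTop z → ContinuousAt T x) :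
    Tendsto (fun k => dist (z (k + 1)) (z k)) atTop (𝓝 0) := by
  refine tendsto_order.2 ⟨fun r hr => .of_forall fun k => hr.trans_le dist_nonneg,
    fun δ hδ => ?_⟩
  by_contra h
  set l := atTop ⊓ 𝓟 {k | δ ≤ dist (z (k + 1)) (z k)}
  have : NeBot l := frequently_iff_neBot.1 (by simpa only [not_eventually, not_lt] using h)
  obtain ⟨c, -, hc⟩ := hK.exists_mapClusterPt (f := l) (u := z)
    (le_principal_iff.2 (mem_inf_of_left (univ_mem' hzK)))
  have hc_atTop : MapClusterPt c atTop z := hc.mono inf_le_left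
  have hU : ball c (δ / 2) ∩ T ⁻¹' ball c (δ / 2) ∈ 𝓝 c := by
    refine inter_mem (ball_mem_nhds c (half_pos hδ)) (hcont c hc_atTop ?_)
    rw [hfix c hc_atTop]
    exact ball_mem_nhds c (half_pos hδ)
  obtain ⟨k, ⟨hk_near, hTk_near⟩, hk_far⟩ :=
    ((mapClusterPt_iff_frequently.1 hc _ hU).and_eventually
      (eventually_inf_principal.2 (.of_forall fun k hk => hk))).exists
  have : dist (z (k + 1)) (z k) < δ := by
    rw [hz]
    linarith [dist_triangle_right (T (z k)) (z k) c, mem_ball.1 hk_near, mem_ball.1 hTk_near]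
  exact this.not_ge hk_far

theorem Set.Finite.exists_pos_forall_dist_lt_imp_eq {A : Set X} (hA : A.Finite) (a : X) :
    ∃ ε > 0, ∀ c ∈ A, dist c a < ε → c = a := by
  have hopen : (A \ {a})ᶜ ∈ 𝓝 a :=
    (hA.sdiff.isClosed.isOpen_compl).mem_nhds fun h => h.2 rfl
  obtain ⟨ε, hε, hball⟩ := Metric.mem_nhds_iff.1 hopen
  refine ⟨ε, hε, fun c hc hca => ?_⟩
  by_contra hne
  exact hball (mem_ball.2 hca) ⟨hc, hne⟩

/-- Finite version of Ostrowski's theorem on sequences with vanishing steps. -/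
theorem subsingleton_mapClusterPt_of_tendsto_dist_succ {z : ℕ → X} {K : Set X}
    (hK : IsCompact K) (hzK : ∀ k, z k ∈ K)
    (hstep : Tendsto (fun k => dist (z (k + 1)) (z k)) atTop (𝓝 0))
    (hfin : {x | MapClusterPt x atTop z}.Finite) :
    {x | MapClusterPt x atTop z}.Subsingleton := by
  intro a ha b hb
  by_contra hba
  obtain ⟨ε, hε, hisol⟩ := hfin.exists_pos_forall_dist_lt_imp_eq a
  have hε3 : 0 < ε / 3 := by positivity
  have hab : ε ≤ dist b a := not_lt.1 fun h => hba (hisol b hb h).symm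
  have hlow : ∃ᶠ k in atTop, dist (z k) a < ε / 3 :=
    mapClusterPt_iff_frequently.1 ha _ (ball_mem_nhds a hε3)
  have hhigh : ∃ᶠ k in atTop, ε / 3 ≤ dist (z k) a :=
    (mapClusterPt_iff_frequently.1 hb _ (ball_mem_nhds b hε3)).mono fun k hk => by
      linarith [dist_triangle_left b a (z k), mem_ball.1 hk]
  have hsteps : ∀ᶠ k in atTop, dist (z (k + 1)) a < dist (z k) a + (2 * ε / 3 - ε / 3) :=
    (hstep.eventually (gt_mem_nhds hε3)).mono fun k hk => by
      linarith [dist_triangle (z (k + 1)) (z k) a]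
  have hannulus : ∃ᶠ k in atTop, z k ∈ K ∩ (closedBall a (2 * ε / 3) \ ball a (ε / 3)) :=
    (frequently_mem_Ico_of_frequently_lt_of_frequently_le hsteps hlow hhigh).mono
      fun k hk => ⟨hzK k, mem_closedBall.2 hk.2.le, fun h => (mem_ball.1 h).not_ge hk.1⟩
  obtain ⟨c, ⟨-, hc_out, hc_in⟩, hc⟩ :=
    (hK.inter_right (isClosed_closedBall.sdiff isOpen_ball)).exists_mapClusterPt_of_frequently
      hannulus
  have hca : c = a := hisol c hc (by linarith [mem_closedBall.1 hc_out])
  exact hc_in (hca ▸ mem_ball_self hε3)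

end

/-- Convergence of a fixed-point iteration with finitely many accumulation
points, all of which are fixed points of the continuous map `T`. -/
theorem stmt16 {X : Type*} [MetricSpace X] (T : X → X) (z : ℕ → X)
    (hz : ∀ k, z (k + 1) = T (z k))
    (A : Set X) (hA : A = {x | MapClusterPt x Filter.atTop z})
    (hfin : A.Finite)
    (hfix : ∀ x ∈ A, T x = x)
    (hcont : ∀ x ∈ A, ContinuousAt T x)
    (hcomp : IsCompact (closure (Set.range z))) :
    ∃ x, Filter.Tendsto z Filter.atTop (nhds x) := by
  subst hA
  have hzK : ∀ k, z k ∈ closure (range z) := fun k => subset_closure (mem_range_self k)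
  have hstep := tendsto_dist_succ_of_mapClusterPt_isFixedPt hz hcomp hzK hfix hcont
  have hunique := subsingleton_mapClusterPt_of_tendsto_dist_succ hcomp hzK hstep hfin
  obtain ⟨a, -, ha⟩ := hcomp.exists_mapClusterPt_of_frequently (l := atTop) (.of_forall hzK)
  exact ⟨a, hcomp.tendsto_nhds_of_unique_mapClusterPt (.of_forall hzK)
    fun x _ hx => hunique hx ha⟩
end
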